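/- Necklace Lie bracket formula: let Q be a finite quiver and 𝕂Q̄ its doubled path algebra with the standard double Poisson bracket. Then for cyclic paths a₁a₂⋯a_k and b₁b₂⋯b_l with a_i, b_j ∈ Q̄, the induced Lie bracket on HH₀(𝕂Q̄) is given by {a₁a₂⋯a_k, b₁b₂⋯b_l} = Σ_{1≤i≤k, 1≤j≤l} {a_i,b_j} · e_{t(a_{i+1})} a_{i+1}a_{i+2}⋯a_k a₁⋯a_{i−1} b_{j+1}⋯b_l b₁⋯b_{j−1}, where the indices of a are taken modulo k and those of b modulo l, and where {a,a*} = 1, {a*,a} = −1 for a ∈ Q, and {f,g} = 0 for arrows f,g ∈ Q̄ with f ≠ g*. -/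

import Mathlib

/-! STATEMENT 6: the necklace Lie bracket formula on HH₀(𝕂Q̄): for cyclic paths
a₁⋯a_k, b₁⋯b_l one has {a₁⋯a_k, b₁⋯b_l} = Σ_{i,j} {a_i,b_j}·e_{t(a_{i+1})}
a_{i+1}⋯a_{i−1} b_{j+1}⋯b_{j−1}, indices cyclic, with {a,a*} = 1 = −{a*,a} and
{f,g} = 0 for f ≠ g*. -/

open TensorProduct

noncomputable section

variable (K : Type) [Field K]

/-- The cyclic permutation `x ⊗ y ⊗ z ↦ y ⊗ z ⊗ x` on the triple tensor product. -/
def cyc132 (A : Type) [Ring A] [Algebra K A] :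
    A ⊗[K] (A ⊗[K] A) →ₗ[K] A ⊗[K] (A ⊗[K] A) :=
  (TensorProduct.assoc K A A A).toLinearMap ∘ₗ
    (TensorProduct.comm K A (A ⊗[K] A)).toLinearMap

/-- `⦃b, u ⊗ v⦄_L = ⦃b, u⦄ ⊗ v`. -/
def brExtL (A : Type) [Ring A] [Algebra K A]
    (f : A →ₗ[K] A ⊗[K] A) : A ⊗[K] A →ₗ[K] A ⊗[K] (A ⊗[K] A) :=
  (TensorProduct.assoc K A A A).toLinearMap ∘ₗ TensorProduct.map f LinearMap.id

/-- Outer bimodule structure: left multiplication `b · (u ⊗ v) = bu ⊗ v`. -/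
def outL (A : Type) [Ring A] [Algebra K A] (b : A) :
    A ⊗[K] A →ₗ[K] A ⊗[K] A :=
  TensorProduct.map (LinearMap.mulLeft K b) LinearMap.id

/-- Outer bimodule structure: right multiplication `(u ⊗ v) · c = u ⊗ vc`. -/
def outR (A : Type) [Ring A] [Algebra K A] (c : A) :
    A ⊗[K] A →ₗ[K] A ⊗[K] A :=
  TensorProduct.map LinearMap.id (LinearMap.mulRight K c)

/-- A double Poisson bracket (Van den Bergh) on an `R`-algebra `A`,
where `R = ⊕_{i ∈ I} 𝕂 e_i` is encoded by the family of idempotents `e : I → A`;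
`R`-bilinearity is encoded by the vanishing `⦃e_i, -⦄ = 0`. -/
structure DoubleBracket (I : Type) (A : Type) [Ring A] [Algebra K A] (e : I → A) where
  br : A →ₗ[K] A →ₗ[K] A ⊗[K] A
  skew : ∀ a b : A, br a b = - (TensorProduct.comm K A A) (br b a)
  leibniz : ∀ a b c : A,
    br a (b * c) = outR K A c (br a b) + outL K A b (br a c)
  jacobi : ∀ a b c : A,
    brExtL K A (br a) (br b c)
      + cyc132 K A (brExtL K A (br c) (br a b))
      + cyc132 K A (cyc132 K A (brExtL K A (br b) (br c a))) = 0
  e_vanish : ∀ (i : I) (a : A), br (e i) a = 0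

/-- The span of commutators `[A,A]`. -/
def commSpan (A : Type) [Ring A] [Algebra K A] : Submodule K A :=
  Submodule.span K {x : A | ∃ a b : A, x = a * b - b * a}

/-- Zeroth Hochschild homology `HH₀(A) = A/[A,A]`. -/
abbrev HH0 (A : Type) [Ring A] [Algebra K A] := A ⧸ commSpan K A

section PathAlgebra

/- A finite quiver `Q`: vertex set `V`, arrow set `E`, source `Qs`, target `Qt`.
The doubled quiver `Q̄` has arrows `E ⊕ E`: `Sum.inl a = a` and `Sum.inr a = a*`. -/
variable (V E : Type) [Fintype V] [DecidableEq V] [Fintype E] [DecidableEq E]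
variable (Qs Qt : E → V)

/-- Source of a doubled arrow. -/
def sbar : E ⊕ E → V := Sum.elim Qs Qt

/-- Target of a doubled arrow. -/
def tbar : E ⊕ E → V := Sum.elim Qt Qs

/-- The involution `a ↦ a*`, `a* ↦ a` on doubled arrows. -/
def dstar : E ⊕ E → E ⊕ E := Sum.elim Sum.inr Sum.inl

/-- The defining relations of the path algebra of the doubled quiver `Q̄`
(products of paths compose like functions: in `x * y` the path `y` comes first). -/
inductive PathRel :
    FreeAlgebra K (V ⊕ (E ⊕ E)) → FreeAlgebra K (V ⊕ (E ⊕ E)) → Prop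
  | vert_mul (i j : V) :
      PathRel (FreeAlgebra.ι K (Sum.inl i) * FreeAlgebra.ι K (Sum.inl j))
        (if i = j then FreeAlgebra.ι K (Sum.inl i) else 0)
  | vert_sum :
      PathRel (Finset.univ.sum fun i : V => FreeAlgebra.ι K (Sum.inl i)) 1
  | arr_left (x : E ⊕ E) :
      PathRel (FreeAlgebra.ι K (Sum.inl (tbar V E Qs Qt x)) * FreeAlgebra.ι K (Sum.inr x))
        (FreeAlgebra.ι K (Sum.inr x))
  | arr_right (x : E ⊕ E) :
      PathRel (FreeAlgebra.ι K (Sum.inr x) * FreeAlgebra.ι K (Sum.inl (sbar V E Qs Qt x)))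
        (FreeAlgebra.ι K (Sum.inr x))

/-- The path algebra `𝕂Q̄` of the doubled quiver, presented by generators and relations. -/
abbrev PathAlg := RingQuot (PathRel K V E Qs Qt)

/-- The trivial path (idempotent) `e_i` at a vertex `i`. -/
def vtx (i : V) : PathAlg K V E Qs Qt :=
  RingQuot.mkAlgHom K (PathRel K V E Qs Qt) (FreeAlgebra.ι K (Sum.inl i))

/-- The element of `𝕂Q̄` given by a doubled arrow. -/
def arr (x : E ⊕ E) : PathAlg K V E Qs Qt :=
  RingQuot.mkAlgHom K (PathRel K V E Qs Qt) (FreeAlgebra.ι K (Sum.inr x))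

/-- The standard noncommutative moment map `w = Σ_{a ∈ Q} (a a* − a* a)` of `𝕂Q̄`. -/
def ncw : PathAlg K V E Qs Qt :=
  Finset.univ.sum fun a : E =>
    arr K V E Qs Qt (Sum.inl a) * arr K V E Qs Qt (Sum.inr a)
      - arr K V E Qs Qt (Sum.inr a) * arr K V E Qs Qt (Sum.inl a)

/-- The condition that a double bracket on `𝕂Q̄` is the standard one:
`⦃a,a*⦄ = e_{s(a)} ⊗ e_{t(a)}`, `⦃a*,a⦄ = −e_{t(a)} ⊗ e_{s(a)}`, and `⦃f,g⦄ = 0`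
for arrows `f ≠ g*`. -/
def IsQuiverBracket (D : DoubleBracket K V (PathAlg K V E Qs Qt) (vtx K V E Qs Qt)) :
    Prop :=
  (∀ a : E,
    D.br (arr K V E Qs Qt (Sum.inl a)) (arr K V E Qs Qt (Sum.inr a))
      = vtx K V E Qs Qt (Qs a) ⊗ₜ[K] vtx K V E Qs Qt (Qt a))
  ∧ (∀ a : E,
    D.br (arr K V E Qs Qt (Sum.inr a)) (arr K V E Qs Qt (Sum.inl a))
      = - (vtx K V E Qs Qt (Qt a) ⊗ₜ[K] vtx K V E Qs Qt (Qs a)))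
  ∧ (∀ f g : E ⊕ E, f ≠ dstar E g →
      D.br (arr K V E Qs Qt f) (arr K V E Qs Qt g) = 0)

end PathAlgebra

section Necklace

variable (V E : Type) [Fintype V] [DecidableEq V] [Fintype E] [DecidableEq E]
variable (Qs Qt : E → V)

/-- The product `a₁ a₂ ⋯ a_{m+1}` in `𝕂Q̄` of a cyclically indexed word of doubled
arrows (in `x * y` the path `y` is traversed first). -/
def cycProd (m : ℕ) (a : ZMod (m + 1) → E ⊕ E) : PathAlg K V E Qs Qt :=
  (List.ofFn fun j : Fin (m + 1) => arr K V E Qs Qt (a ((j : ℕ) : ZMod (m + 1)))).prod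

/-- The scalar `{f, g}` on doubled arrows: `{a,a*} = 1`, `{a*,a} = −1`, else `0`. -/
def eps (f g : E ⊕ E) : K :=
  if g = dstar E f then (match f with | Sum.inl _ => 1 | Sum.inr _ => -1) else 0

/-- The necklace term
`e_{t(a_{i+1})} a_{i+1} ⋯ a_{i-1} b_{j+1} ⋯ b_{j-1}` appearing in the necklace bracket
formula. -/
def neckTerm (m l : ℕ) (a : ZMod (m + 1) → E ⊕ E) (b : ZMod (l + 1) → E ⊕ E)
    (i : ZMod (m + 1)) (j : ZMod (l + 1)) : PathAlg K V E Qs Qt :=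
  vtx K V E Qs Qt (tbar V E Qs Qt (a (i + 1)))
    * (List.ofFn fun u : Fin m => arr K V E Qs Qt (a (i + 1 + ((u : ℕ) : ZMod (m + 1))))).prod
    * (List.ofFn fun u : Fin l => arr K V E Qs Qt (b (j + 1 + ((u : ℕ) : ZMod (l + 1))))).prod

end Necklace


section NeckAux

namespace NB

variable {A : Type} [Ring A] [Algebra K A]

/-- Inner bimodule structure: `b ⋆ (u ⊗ v) = u ⊗ bv`. -/
def inL (b : A) : A ⊗[K] A →ₗ[K] A ⊗[K] A :=
  TensorProduct.map LinearMap.id (LinearMap.mulLeft K b)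

/-- Inner bimodule structure: `(u ⊗ v) ⋆ c = uc ⊗ v`. -/
def inR (c : A) : A ⊗[K] A →ₗ[K] A ⊗[K] A :=
  TensorProduct.map (LinearMap.mulRight K c) LinearMap.id

@[simp] lemma outL_tmul (b u v : A) : outL K A b (u ⊗ₜ[K] v) = (b * u) ⊗ₜ[K] v := rfl
@[simp] lemma outR_tmul (c u v : A) : outR K A c (u ⊗ₜ[K] v) = u ⊗ₜ[K] (v * c) := rfl
@[simp] lemma inL_tmul (b u v : A) : inL K b (u ⊗ₜ[K] v) = u ⊗ₜ[K] (b * v) := rfl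
@[simp] lemma inR_tmul (c u v : A) : inR K c (u ⊗ₜ[K] v) = (u * c) ⊗ₜ[K] v := rfl

lemma outL_one (t : A ⊗[K] A) : outL K A 1 t = t := by
  induction t using TensorProduct.induction_on with
  | zero => simp
  | tmul u v => simp
  | add x y hx hy => simp [map_add, hx, hy]

lemma outR_one (t : A ⊗[K] A) : outR K A 1 t = t := by
  induction t using TensorProduct.induction_on with
  | zero => simp
  | tmul u v => simp
  | add x y hx hy => simp [map_add, hx, hy]

lemma inL_one (t : A ⊗[K] A) : inL K (1 : A) t = t := by
  induction t using TensorProduct.induction_on with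
  | zero => simp
  | tmul u v => simp
  | add x y hx hy => simp [map_add, hx, hy]

lemma outL_outL (b c : A) (t : A ⊗[K] A) :
    outL K A b (outL K A c t) = outL K A (b * c) t := by
  induction t using TensorProduct.induction_on with
  | zero => simp
  | tmul u v => simp [mul_assoc]
  | add x y hx hy => simp [map_add, hx, hy]

lemma inL_inL (b c : A) (t : A ⊗[K] A) :
    inL K b (inL K c t) = inL K (b * c) t := by
  induction t using TensorProduct.induction_on with
  | zero => simp
  | tmul u v => simp [mul_assoc]
  | add x y hx hy => simp [map_add, hx, hy]

lemma comm_outR (c : A) (t : A ⊗[K] A) :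
    TensorProduct.comm K A A (outR K A c t) = inR K c (TensorProduct.comm K A A t) := by
  induction t using TensorProduct.induction_on with
  | zero => simp
  | tmul u v => simp
  | add x y hx hy => simp [map_add, hx, hy]

lemma comm_outL (b : A) (t : A ⊗[K] A) :
    TensorProduct.comm K A A (outL K A b t) = inL K b (TensorProduct.comm K A A t) := by
  induction t using TensorProduct.induction_on with
  | zero => simp
  | tmul u v => simp
  | add x y hx hy => simp [map_add, hx, hy]

variable {I : Type} {e : I → A} (D : DoubleBracket K I A e)

lemma br_one_right (x : A) : D.br x 1 = 0 := by
  have h := D.leibniz x 1 1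
  rw [mul_one, outR_one, outL_one] at h
  exact (right_eq_add.mp h)

lemma br_mul_left (b c y : A) :
    D.br (b * c) y = inR K c (D.br b y) + inL K b (D.br c y) := by
  rw [D.skew (b * c) y, D.leibniz y b c, map_add, comm_outR, comm_outL, neg_add,
    ← map_neg (inR K c), ← map_neg (inL K b), ← D.skew b y, ← D.skew c y]

/-- Ordered product `g s * g (s+1) * ⋯ * g (s+n-1)`. -/
def pp (g : ℕ → A) : ℕ → ℕ → A
  | _, 0 => 1
  | s, n+1 => g s * pp g (s+1) n

lemma pp_succ' (g : ℕ → A) (n : ℕ) : ∀ s, pp g s (n+1) = pp g s n * g (s+n) := by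
  induction n with
  | zero => intro s; simp [pp]
  | succ n ih =>
    intro s
    show g s * pp g (s+1) (n+1) = (g s * pp g (s+1) n) * g (s+(n+1))
    rw [ih (s+1), ← mul_assoc, show s+1+n = s+(n+1) by omega]

lemma pp_add (g : ℕ → A) (a b : ℕ) : ∀ s, pp g s (a+b) = pp g s a * pp g (s+a) b := by
  induction b with
  | zero => intro s; simp [pp]
  | succ b ih =>
    intro s
    rw [show a+(b+1) = (a+b)+1 by omega, pp_succ', ih s, pp_succ', mul_assoc,
      show s+(a+b) = s+a+b by omega]

lemma pp_congr (g h : ℕ → A) : ∀ (n s t : ℕ), (∀ j, j < n → g (s+j) = h (t+j)) →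
    pp g s n = pp h t n := by
  intro n
  induction n with
  | zero => intros; rfl
  | succ n ih =>
    intro s t hst
    show g s * pp g (s+1) n = h t * pp h (t+1) n
    have h0 : g s = h t := by simpa using hst 0 (by omega)
    have h1 : pp g (s+1) n = pp h (t+1) n := by
      apply ih
      intro j hj
      rw [show s+1+j = s+(j+1) by omega, show t+1+j = t+(j+1) by omega]
      exact hst (j+1) (by omega)
    rw [h0, h1]

lemma ofFn_prod (F : ℕ → A) : ∀ n, (List.ofFn fun u : Fin n => F (u : ℕ)).prod = pp F 0 n := by
  intro n
  induction n generalizing F with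
  | zero => simp [pp]
  | succ n ih =>
    rw [List.ofFn_succ, List.prod_cons]
    show F 0 * (List.ofFn fun u : Fin n => (fun t => F (t+1)) (u : ℕ)).prod = F 0 * pp F 1 n
    rw [ih (fun t => F (t+1))]
    congr 1
    apply pp_congr
    intro j _
    simp [Nat.add_comm]

lemma brR_pp (x : A) (g : ℕ → A) : ∀ (n s : ℕ),
    D.br x (pp g s n) = ∑ j ∈ Finset.range n,
      outL K A (pp g s j) (outR K A (pp g (s+j+1) (n-1-j)) (D.br x (g (s+j)))) := by
  intro n
  induction n with
  | zero => intro s; simp [pp, br_one_right K D x]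
  | succ n ih =>
    intro s
    show D.br x (g s * pp g (s+1) n) = _
    rw [D.leibniz x (g s) (pp g (s+1) n), ih (s+1), map_sum, Finset.sum_range_succ', add_comm]
    congr 1
    · apply Finset.sum_congr rfl
      intro j _
      rw [outL_outL]
      rw [show g s * pp g (s+1) j = pp g s (j+1) from rfl,
        show s+1+j+1 = s+(j+1)+1 by omega, show n-1-j = n+1-1-(j+1) by omega,
        show s+1+j = s+(j+1) by omega]
    · rw [show pp g s 0 = 1 from rfl, outL_one]
      norm_num

lemma brL_pp (y : A) (g : ℕ → A) : ∀ (n s : ℕ),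
    D.br (pp g s n) y = ∑ j ∈ Finset.range n,
      inL K (pp g s j) (inR K (pp g (s+j+1) (n-1-j)) (D.br (g (s+j)) y)) := by
  intro n
  induction n with
  | zero =>
    intro s
    have h0 : D.br (pp g s 0) y = 0 := by
      rw [show pp g s 0 = (1 : A) from rfl, D.skew 1 y, br_one_right, map_zero, neg_zero]
    simp [h0]
  | succ n ih =>
    intro s
    show D.br (g s * pp g (s+1) n) y = _
    rw [br_mul_left K D (g s) (pp g (s+1) n) y, ih (s+1), map_sum, Finset.sum_range_succ',
      add_comm]
    congr 1
    · apply Finset.sum_congr rfl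
      intro j _
      rw [inL_inL]
      rw [show g s * pp g (s+1) j = pp g s (j+1) from rfl,
        show s+1+j+1 = s+(j+1)+1 by omega, show n-1-j = n+1-1-(j+1) by omega,
        show s+1+j = s+(j+1) by omega]
    · rw [show pp g s 0 = 1 from rfl, inL_one]
      norm_num

end NB

/-- Rotation invariance in `HH₀`. -/
lemma NB.mkQ_mul_comm {A : Type} [Ring A] [Algebra K A] (x y : A) :
    (commSpan K A).mkQ (x * y) = (commSpan K A).mkQ (y * x) := by
  rw [← sub_eq_zero, ← map_sub, Submodule.mkQ_apply, Submodule.Quotient.mk_eq_zero]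
  exact Submodule.subset_span ⟨x, y, rfl⟩

lemma NB.sum_zmod {M : Type} [AddCommMonoid M] (n : ℕ) (F : ZMod (n+1) → M) :
    ∑ i : ZMod (n+1), F i = ∑ i ∈ Finset.range (n+1), F (i : ZMod (n+1)) := by
  refine Finset.sum_nbij' (fun i => ZMod.val i) (fun i => (i : ZMod (n+1))) ?_ ?_ ?_ ?_ ?_
  · intro a _; exact Finset.mem_range.mpr (ZMod.val_lt a)
  · intro a _; exact Finset.mem_univ _
  · intro a _; exact ZMod.natCast_rightInverse a
  · intro a ha; exact ZMod.val_natCast_of_lt (Finset.mem_range.mp ha)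
  · intro a _; rw [ZMod.natCast_rightInverse a]

section NBPath

variable (V E : Type) [Fintype V] [DecidableEq V] [Fintype E] [DecidableEq E]
variable (Qs Qt : E → V)

lemma NB.vtx_mul_vtx (i j : V) : vtx K V E Qs Qt i * vtx K V E Qs Qt j
    = if i = j then vtx K V E Qs Qt i else 0 := by
  have h := RingQuot.mkAlgHom_rel K (PathRel.vert_mul (K := K) (Qs := Qs) (Qt := Qt) i j)
  rw [map_mul] at h
  have h2 : vtx K V E Qs Qt i * vtx K V E Qs Qt j
      = RingQuot.mkAlgHom K (PathRel K V E Qs Qt)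
          (if i = j then FreeAlgebra.ι K (Sum.inl i) else 0) := h
  rw [h2, apply_ite (RingQuot.mkAlgHom K (PathRel K V E Qs Qt)), map_zero]
  rfl

lemma NB.vtx_mul_arr (x : E ⊕ E) :
    vtx K V E Qs Qt (tbar V E Qs Qt x) * arr K V E Qs Qt x = arr K V E Qs Qt x := by
  have h := RingQuot.mkAlgHom_rel K (PathRel.arr_left (K := K) (Qs := Qs) (Qt := Qt) x)
  rw [map_mul] at h
  exact h

lemma NB.arr_mul_vtx (x : E ⊕ E) :
    arr K V E Qs Qt x * vtx K V E Qs Qt (sbar V E Qs Qt x) = arr K V E Qs Qt x := by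
  have h := RingQuot.mkAlgHom_rel K (PathRel.arr_right (K := K) (Qs := Qs) (Qt := Qt) x)
  rw [map_mul] at h
  exact h

lemma NB.br_arr (D : DoubleBracket K V (PathAlg K V E Qs Qt) (vtx K V E Qs Qt))
    (hD : IsQuiverBracket K V E Qs Qt D) (f g : E ⊕ E) :
    D.br (arr K V E Qs Qt f) (arr K V E Qs Qt g)
      = eps K E f g •
        (vtx K V E Qs Qt (sbar V E Qs Qt f) ⊗ₜ[K] vtx K V E Qs Qt (tbar V E Qs Qt f)) := by
  by_cases hg : g = dstar E f
  · cases f with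
    | inl x =>
      rw [show dstar E (Sum.inl x) = Sum.inr x from rfl] at hg
      subst hg
      simpa [eps, dstar, sbar, tbar] using hD.1 x
    | inr x =>
      rw [show dstar E (Sum.inr x) = Sum.inl x from rfl] at hg
      subst hg
      rw [hD.2.1 x]
      simp [eps, dstar, sbar, tbar]
      exact (neg_one_smul K _).symm
  · have hf : f ≠ dstar E g := by
      intro h
      apply hg
      subst h
      cases g <;> rfl
    rw [hD.2.2 f g hf, eps.eq_def, if_neg hg, zero_smul]


lemma NB.absorb (m : ℕ) (a : ZMod (m+1) → E ⊕ E)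
    (ha : ∀ i, sbar V E Qs Qt (a i) = tbar V E Qs Qt (a (i+1))) (i : ℕ) :
    (vtx K V E Qs Qt (sbar V E Qs Qt (a (i : ZMod (m+1))))
        * NB.pp (fun u => arr K V E Qs Qt (a (u : ZMod (m+1)))) (i+1) m)
      * vtx K V E Qs Qt (tbar V E Qs Qt (a (i : ZMod (m+1))))
    = vtx K V E Qs Qt (sbar V E Qs Qt (a (i : ZMod (m+1))))
        * NB.pp (fun u => arr K V E Qs Qt (a (u : ZMod (m+1)))) (i+1) m := by
  match m, a, ha with
  | 0, a, ha =>
    show (vtx K V E Qs Qt (sbar V E Qs Qt (a (i : ZMod 1))) * 1)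
        * vtx K V E Qs Qt (tbar V E Qs Qt (a (i : ZMod 1))) = _ * (1 : PathAlg K V E Qs Qt)
    simp only [mul_one]
    have hv : sbar V E Qs Qt (a (i : ZMod 1)) = tbar V E Qs Qt (a (i : ZMod 1)) := by
      have h := ha (i : ZMod 1)
      rwa [show (i : ZMod 1) + 1 = (i : ZMod 1) from Subsingleton.elim _ _] at h
    rw [← hv, NB.vtx_mul_vtx, if_pos rfl]
  | (m'+1), a, ha =>
    rw [NB.pp_succ' (fun u => arr K V E Qs Qt (a (u : ZMod (m'+1+1)))) m' (i+1)]
    have hv : tbar V E Qs Qt (a (i : ZMod (m'+1+1)))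
        = sbar V E Qs Qt (a ((i+1+m' : ℕ) : ZMod (m'+1+1))) := by
      rw [ha (((i+1+m' : ℕ) : ZMod (m'+1+1)))]
      congr 2
      have h2 : ((m'+2 : ℕ) : ZMod (m'+2)) = 0 := ZMod.natCast_self _
      push_cast at h2 ⊢
      linear_combination -h2
    have harr : arr K V E Qs Qt (a ((i+1+m' : ℕ) : ZMod (m'+1+1)))
        * vtx K V E Qs Qt (tbar V E Qs Qt (a (i : ZMod (m'+1+1))))
        = arr K V E Qs Qt (a ((i+1+m' : ℕ) : ZMod (m'+1+1))) := by
      rw [hv]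
      exact NB.arr_mul_vtx K V E Qs Qt _
    calc (vtx K V E Qs Qt (sbar V E Qs Qt (a (i : ZMod (m'+1+1))))
            * (NB.pp (fun u => arr K V E Qs Qt (a (u : ZMod (m'+1+1)))) (i+1) m'
                * arr K V E Qs Qt (a ((i+1+m' : ℕ) : ZMod (m'+1+1)))))
          * vtx K V E Qs Qt (tbar V E Qs Qt (a (i : ZMod (m'+1+1))))
        = vtx K V E Qs Qt (sbar V E Qs Qt (a (i : ZMod (m'+1+1))))
            * (NB.pp (fun u => arr K V E Qs Qt (a (u : ZMod (m'+1+1)))) (i+1) m'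
                * (arr K V E Qs Qt (a ((i+1+m' : ℕ) : ZMod (m'+1+1)))
                    * vtx K V E Qs Qt (tbar V E Qs Qt (a (i : ZMod (m'+1+1)))))) := by
          simp only [mul_assoc]
      _ = _ := by rw [harr]

lemma NB.key (D : DoubleBracket K V (PathAlg K V E Qs Qt) (vtx K V E Qs Qt))
    (hD : IsQuiverBracket K V E Qs Qt D)
    (m l : ℕ) (a : ZMod (m+1) → E ⊕ E) (b : ZMod (l+1) → E ⊕ E)
    (ha : ∀ i, sbar V E Qs Qt (a i) = tbar V E Qs Qt (a (i+1)))
    (i j : ℕ) (him : i < m+1) (hjl : j < l+1) :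
    (commSpan K (PathAlg K V E Qs Qt)).mkQ (LinearMap.mul' K (PathAlg K V E Qs Qt)
      (NB.inL K (NB.pp (fun u => arr K V E Qs Qt (a (u : ZMod (m+1)))) 0 i)
        (NB.inR K (NB.pp (fun u => arr K V E Qs Qt (a (u : ZMod (m+1)))) (i+1) (m-i))
          (outL K (PathAlg K V E Qs Qt) (NB.pp (fun u => arr K V E Qs Qt (b (u : ZMod (l+1)))) 0 j)
            (outR K (PathAlg K V E Qs Qt) (NB.pp (fun u => arr K V E Qs Qt (b (u : ZMod (l+1)))) (j+1) (l-j))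
              (D.br (arr K V E Qs Qt (a (i : ZMod (m+1)))) (arr K V E Qs Qt (b (j : ZMod (l+1))))))))))
    = eps K E (a (i : ZMod (m+1))) (b (j : ZMod (l+1))) •
        (commSpan K (PathAlg K V E Qs Qt)).mkQ
          (neckTerm K V E Qs Qt m l a b (i : ZMod (m+1)) (j : ZMod (l+1))) := by
  set fA : ℕ → PathAlg K V E Qs Qt := fun u => arr K V E Qs Qt (a (u : ZMod (m+1))) with hfA
  set fB : ℕ → PathAlg K V E Qs Qt := fun u => arr K V E Qs Qt (b (u : ZMod (l+1))) with hfB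
  rw [NB.br_arr K V E Qs Qt D hD]
  simp only [map_smul, NB.outR_tmul, NB.outL_tmul, NB.inR_tmul, NB.inL_tmul,
    LinearMap.mul'_apply]
  -- abbreviations
  have hperA : ∀ t, fA (m+1+t) = fA (0+t) := by
    intro t
    show arr K V E Qs Qt (a ((m+1+t : ℕ) : ZMod (m+1))) = arr K V E Qs Qt (a ((0+t : ℕ) : ZMod (m+1)))
    congr 2
    simp [Nat.cast_add, ZMod.natCast_self]
  have hperB : ∀ t, fB (l+1+t) = fB (0+t) := by
    intro t
    show arr K V E Qs Qt (b ((l+1+t : ℕ) : ZMod (l+1))) = arr K V E Qs Qt (b ((0+t : ℕ) : ZMod (l+1)))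
    congr 2
    simp [Nat.cast_add, ZMod.natCast_self]
  have hqp : NB.pp fA (i+1) (m-i) * NB.pp fA 0 i = NB.pp fA (i+1) m := by
    have h1 := NB.pp_add fA (m-i) i (i+1)
    rw [show (m-i)+i = m by omega, show (i+1)+(m-i) = m+1 by omega] at h1
    rw [h1, NB.pp_congr fA fA i (m+1) 0 (fun t _ => hperA t)]
  have hsr : NB.pp fB (j+1) (l-j) * NB.pp fB 0 j = NB.pp fB (j+1) l := by
    have h1 := NB.pp_add fB (l-j) j (j+1)
    rw [show (l-j)+j = l by omega, show (j+1)+(l-j) = l+1 by omega] at h1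
    rw [h1, NB.pp_congr fB fB j (l+1) 0 (fun t _ => hperB t)]
  have hA2 : NB.pp (fun t => arr K V E Qs Qt (a ((i : ZMod (m+1)) + 1 + (t : ZMod (m+1))))) 0 m
      = NB.pp fA (i+1) m := by
    apply NB.pp_congr
    intro t _
    show arr K V E Qs Qt (a ((i : ZMod (m+1)) + 1 + ((0+t : ℕ) : ZMod (m+1))))
        = arr K V E Qs Qt (a ((i+1+t : ℕ) : ZMod (m+1)))
    congr 2
    push_cast
    ring
  have hB2 : NB.pp (fun t => arr K V E Qs Qt (b ((j : ZMod (l+1)) + 1 + (t : ZMod (l+1))))) 0 l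
      = NB.pp fB (j+1) l := by
    apply NB.pp_congr
    intro t _
    show arr K V E Qs Qt (b ((j : ZMod (l+1)) + 1 + ((0+t : ℕ) : ZMod (l+1))))
        = arr K V E Qs Qt (b ((j+1+t : ℕ) : ZMod (l+1)))
    congr 2
    push_cast
    ring
  have hneck : neckTerm K V E Qs Qt m l a b (i : ZMod (m+1)) (j : ZMod (l+1))
      = (vtx K V E Qs Qt (sbar V E Qs Qt (a (i : ZMod (m+1)))) * NB.pp fA (i+1) m)
          * NB.pp fB (j+1) l := by
    show vtx K V E Qs Qt (tbar V E Qs Qt (a ((i : ZMod (m+1)) + 1)))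
        * (List.ofFn fun u : Fin m =>
            arr K V E Qs Qt (a ((i : ZMod (m+1)) + 1 + ((u : ℕ) : ZMod (m+1))))).prod
        * (List.ofFn fun u : Fin l =>
            arr K V E Qs Qt (b ((j : ZMod (l+1)) + 1 + ((u : ℕ) : ZMod (l+1))))).prod = _
    have hAof : (List.ofFn fun u : Fin m =>
          arr K V E Qs Qt (a ((i : ZMod (m+1)) + 1 + ((u : ℕ) : ZMod (m+1))))).prod
        = NB.pp (fun t => arr K V E Qs Qt (a ((i : ZMod (m+1)) + 1 + (t : ZMod (m+1))))) 0 m :=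
      NB.ofFn_prod (fun t => arr K V E Qs Qt (a ((i : ZMod (m+1)) + 1 + (t : ZMod (m+1))))) m
    have hBof : (List.ofFn fun u : Fin l =>
          arr K V E Qs Qt (b ((j : ZMod (l+1)) + 1 + ((u : ℕ) : ZMod (l+1))))).prod
        = NB.pp (fun t => arr K V E Qs Qt (b ((j : ZMod (l+1)) + 1 + (t : ZMod (l+1))))) 0 l :=
      NB.ofFn_prod (fun t => arr K V E Qs Qt (b ((j : ZMod (l+1)) + 1 + (t : ZMod (l+1))))) l
    rw [hAof, hBof, hA2, hB2, ← ha (i : ZMod (m+1))]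
  have habs := NB.absorb K V E Qs Qt m a ha i
  congr 1
  rw [show (NB.pp fB 0 j * vtx K V E Qs Qt (sbar V E Qs Qt (a (i : ZMod (m+1))))
        * NB.pp fA (i+1) (m-i))
      * (NB.pp fA 0 i
          * (vtx K V E Qs Qt (tbar V E Qs Qt (a (i : ZMod (m+1)))) * NB.pp fB (j+1) (l-j)))
      = NB.pp fB 0 j
        * (vtx K V E Qs Qt (sbar V E Qs Qt (a (i : ZMod (m+1))))
            * (NB.pp fA (i+1) (m-i) * (NB.pp fA 0 i
              * (vtx K V E Qs Qt (tbar V E Qs Qt (a (i : ZMod (m+1)))) * NB.pp fB (j+1) (l-j)))))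
    from by simp only [mul_assoc]]
  rw [NB.mkQ_mul_comm]
  rw [show (vtx K V E Qs Qt (sbar V E Qs Qt (a (i : ZMod (m+1))))
        * (NB.pp fA (i+1) (m-i) * (NB.pp fA 0 i
            * (vtx K V E Qs Qt (tbar V E Qs Qt (a (i : ZMod (m+1)))) * NB.pp fB (j+1) (l-j)))))
      * NB.pp fB 0 j
      = ((vtx K V E Qs Qt (sbar V E Qs Qt (a (i : ZMod (m+1))))
          * (NB.pp fA (i+1) (m-i) * NB.pp fA 0 i))
          * vtx K V E Qs Qt (tbar V E Qs Qt (a (i : ZMod (m+1)))))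
          * (NB.pp fB (j+1) (l-j) * NB.pp fB 0 j)
    from by simp only [mul_assoc]]
  rw [hqp, hsr, habs, hneck]

end NBPath

end NeckAux

theorem statement6
    (V E : Type) [Fintype V] [DecidableEq V] [Fintype E] [DecidableEq E]
    (Qs Qt : E → V)
    (D : DoubleBracket K V (PathAlg K V E Qs Qt) (vtx K V E Qs Qt))
    (hD : IsQuiverBracket K V E Qs Qt D)
    -- `B` is the induced (necklace) Lie bracket on `HH₀(𝕂Q̄)`:
    (B : HH0 K (PathAlg K V E Qs Qt) →ₗ[K] HH0 K (PathAlg K V E Qs Qt)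
          →ₗ[K] HH0 K (PathAlg K V E Qs Qt))
    (hB : ∀ x y : PathAlg K V E Qs Qt,
      B ((commSpan K (PathAlg K V E Qs Qt)).mkQ x) ((commSpan K (PathAlg K V E Qs Qt)).mkQ y)
        = (commSpan K (PathAlg K V E Qs Qt)).mkQ (LinearMap.mul' K _ (D.br x y)))
    -- two cyclic paths `a₁⋯a_{m+1}` and `b₁⋯b_{l+1}`:
    (m l : ℕ) (a : ZMod (m + 1) → E ⊕ E) (b : ZMod (l + 1) → E ⊕ E)
    (ha : ∀ i, sbar V E Qs Qt (a i) = tbar V E Qs Qt (a (i + 1)))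
    (hb : ∀ j, sbar V E Qs Qt (b j) = tbar V E Qs Qt (b (j + 1))) :
    B ((commSpan K (PathAlg K V E Qs Qt)).mkQ (cycProd K V E Qs Qt m a))
      ((commSpan K (PathAlg K V E Qs Qt)).mkQ (cycProd K V E Qs Qt l b))
      = Finset.univ.sum fun i : ZMod (m + 1) =>
          Finset.univ.sum fun j : ZMod (l + 1) =>
            eps K E (a i) (b j) •
              (commSpan K (PathAlg K V E Qs Qt)).mkQ
                (neckTerm K V E Qs Qt m l a b i j) := by
  classical
  rw [hB]
  have hP : cycProd K V E Qs Qt m a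
      = NB.pp (fun u => arr K V E Qs Qt (a (u : ZMod (m+1)))) 0 (m+1) :=
    NB.ofFn_prod (fun u => arr K V E Qs Qt (a (u : ZMod (m+1)))) (m+1)
  have hQ : cycProd K V E Qs Qt l b
      = NB.pp (fun u => arr K V E Qs Qt (b (u : ZMod (l+1)))) 0 (l+1) :=
    NB.ofFn_prod (fun u => arr K V E Qs Qt (b (u : ZMod (l+1)))) (l+1)
  rw [hP, hQ]
  rw [NB.brL_pp K D (NB.pp (fun u => arr K V E Qs Qt (b (u : ZMod (l+1)))) 0 (l+1))
    (fun u => arr K V E Qs Qt (a (u : ZMod (m+1)))) (m+1) 0]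
  simp only [map_sum, Nat.zero_add, Nat.add_sub_cancel]
  rw [NB.sum_zmod m]
  refine Finset.sum_congr rfl fun i hi => ?_
  rw [NB.sum_zmod l]
  rw [NB.brR_pp K D (arr K V E Qs Qt (a (i : ZMod (m+1))))
    (fun u => arr K V E Qs Qt (b (u : ZMod (l+1)))) (l+1) 0]
  simp only [map_sum, Nat.zero_add, Nat.add_sub_cancel]
  refine Finset.sum_congr rfl fun j hj => ?_
  exact NB.key K V E Qs Qt D hD m l a b ha i j
    (Finset.mem_range.mp hi) (Finset.mem_range.mp hj)

end
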